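/- Let k be a fixed client and let x^A and x^B be two preprocessed fractional solutions with x^A_{ij} = x^B_{ij} for all facilities i and all clients j ≠ k, with connection graphs H(x^A) and H(x^B) built from a single shared assignment of distinct clock values. Then for every client j, if the connection paths P_j(x^A) and P_j(x^B) differ, at least one of P_j(x^A) and P_j(x^B) contains the vertex k. -/
import Mathlib


/-!
STATEMENT 14: Let k be a fixed client and x^A, x^B two preprocessed fractional solutions with
x^A_{ij} = x^B_{ij} for all facilities i and all clients j ≠ k, with connection graphs built
from a single shared assignment of distinct clock values.  Then for every client j, if the
connection paths P_j(x^A) and P_j(x^B) differ, at least one of them contains the vertex k.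
-/

namespace DFL14

noncomputable section

variable {F C : Type*}

/-- Facilities fractionally serving client `j` (neighborhood of `j` in the support graph). -/
def facNbrs [Fintype F] (x : F → C → ℝ) (j : C) : Finset F :=
  Finset.univ.filter fun i => 0 < x i j

/-- Clients fractionally served by facility `i` (neighborhood of `i` in the support graph). -/
def cliNbrs [Fintype C] (x : F → C → ℝ) (i : F) : Finset C :=
  Finset.univ.filter fun j => 0 < x i j

/-- An element of a nonempty finset minimizing `f`. -/
def argminOn {α : Type*} (f : α → ℝ) (s : Finset α) (h : s.Nonempty) : α :=
  Classical.choose (s.exists_min_image f h)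

/-- The connection graph: every vertex points to the neighbor (in the support graph of `x`)
with the smallest clock value (`Q` on facilities, `R` on clients). -/
def nextV [Fintype F] [Fintype C] (x : F → C → ℝ) (Q : F → ℝ) (R : C → ℝ) :
    F ⊕ C → Option (F ⊕ C)
  | Sum.inl i =>
    if h : (cliNbrs x i).Nonempty then some (Sum.inr (argminOn R _ h)) else none
  | Sum.inr j =>
    if h : (facNbrs x j).Nonempty then some (Sum.inl (argminOn Q _ h)) else none

/-- Follow `next`, accumulating visited vertices and stopping just before revisiting one. -/
def pathAux {α : Type*} [DecidableEq α] (next : α → Option α) :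
    ℕ → List α → α → List α
  | 0, vis, v => vis ++ [v]
  | n+1, vis, v =>
    match next v with
    | none => vis ++ [v]
    | some w => if w ∈ vis ++ [v] then vis ++ [v] else pathAux next n (vis ++ [v]) w

/-- The connection path of client `j`: start at `j` and repeatedly follow the unique outgoing
arc of the connection graph, stopping just before revisiting an already visited vertex. -/
def connPath [Fintype F] [Fintype C] [DecidableEq F] [DecidableEq C]
    (x : F → C → ℝ) (Q : F → ℝ) (R : C → ℝ) (j : C) : List (F ⊕ C) :=
  pathAux (nextV x Q R) (Fintype.card F + Fintype.card C) List.nil (Sum.inr j)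

/-- The path `p` traverses the arc `(u, v)`. -/
def traverses {α : Type*} (p : List α) (u v : α) : Prop :=
  ∃ l1 l2 : List α, p = l1 ++ u :: v :: l2

/-- The last facility on a path: the facility to which a client is assigned. -/
def assignedFac (p : List (F ⊕ C)) : Option F :=
  p.reverse.findSome? Sum.getLeft?

/-- Facility `i` lies on a 2-cycle of the connection graph, i.e. it is opened. -/
def opens [Fintype F] [Fintype C] (x : F → C → ℝ) (Q : F → ℝ) (R : C → ℝ) (i : F) : Prop :=
  ∃ j : C, nextV x Q R (Sum.inl i) = some (Sum.inr j) ∧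
    nextV x Q R (Sum.inr j) = some (Sum.inl i)

/-- A preprocessed fractional solution: `x i j ∈ {0, y i}`, `y i ∈ [0,1]`, and every client is
fully fractionally connected. -/
def Preprocessed [Fintype F] (x : F → C → ℝ) (y : F → ℝ) : Prop :=
  (∀ i j, x i j = 0 ∨ x i j = y i) ∧ (∀ i, y i ∈ Set.Icc (0:ℝ) 1) ∧ (∀ j, ∑ i, x i j = 1)

end

section Aux

lemma argminOn_mem {α : Type*} (f : α → ℝ) (s : Finset α) (h : s.Nonempty) :
    argminOn f s h ∈ s :=
  (Classical.choose_spec (s.exists_min_image f h)).1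

lemma argminOn_le {α : Type*} (f : α → ℝ) (s : Finset α) (h : s.Nonempty)
    {b : α} (hb : b ∈ s) : f (argminOn f s h) ≤ f b :=
  (Classical.choose_spec (s.exists_min_image f h)).2 b hb

lemma mem_pathAux {α : Type*} [DecidableEq α] (next : α → Option α) :
    ∀ (n : ℕ) (vis : List α) (v a : α), a ∈ vis ++ [v] → a ∈ pathAux next n vis v := by
  intro n
  induction n with
  | zero => intro vis v a ha; simpa [pathAux] using ha
  | succ n ih =>
    intro vis v a ha
    simp only [pathAux]
    cases hv : next v with
    | none => simpa using ha
    | some w =>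
      by_cases hw : w ∈ vis ++ [v]
      · simp [hw]; simpa using ha
      · simp only [hw, if_false]
        exact ih (vis ++ [v]) w a (by simp at ha ⊢; tauto)

lemma pathAux_diff {α : Type*} [DecidableEq α] (f g : α → Option α) (t : α)
    (hfg : ∀ v, f v ≠ g v → v = t ∨ f v = some t ∨ g v = some t) :
    ∀ (n : ℕ) (vis : List α) (v : α),
      pathAux f n vis v ≠ pathAux g n vis v →
      t ∈ pathAux f n vis v ∨ t ∈ pathAux g n vis v := by
  intro n
  induction n with
  | zero => intro vis v h; exact absurd rfl h
  | succ n ih =>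
    intro vis v h
    by_cases heq : f v = g v
    · simp only [pathAux, heq] at h ⊢
      cases hg : g v with
      | none => simp [hg] at h
      | some w =>
        simp only [hg] at h ⊢
        by_cases hw : w ∈ vis ++ [v]
        · simp [hw] at h
        · simp only [hw, if_false] at h ⊢
          exact ih (vis ++ [v]) w h
    · rcases hfg v heq with hvt | hft | hgt
      · rw [← hvt]
        exact Or.inl (mem_pathAux f _ vis v v (by simp))
      · left
        simp only [pathAux, hft]
        by_cases hw : t ∈ vis ++ [v]
        · simp [hw]
        · simp only [hw, if_false]
          exact mem_pathAux f n (vis ++ [v]) t t (by simp)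
      · right
        simp only [pathAux, hgt]
        by_cases hw : t ∈ vis ++ [v]
        · simp [hw]
        · simp only [hw, if_false]
          exact mem_pathAux g n (vis ++ [v]) t t (by simp)

end Aux

/-- If two preprocessed solutions agree except at client `k`, connection paths can differ only
if they contain `k`. -/
theorem differing_path_contains_k
    {F C : Type*} [Fintype F] [Fintype C] [DecidableEq F] [DecidableEq C]
    (k : C) (xA xB : F → C → ℝ) (yA yB : F → ℝ)
    (hA : Preprocessed xA yA) (hB : Preprocessed xB yB)
    (hagree : ∀ (i : F) (j : C), j ≠ k → xA i j = xB i j)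
    (Q : F → ℝ) (R : C → ℝ)
    (hdistinct : Function.Injective (Sum.elim Q R)) :
    ∀ j : C, connPath xA Q R j ≠ connPath xB Q R j →
      Sum.inr k ∈ connPath xA Q R j ∨ Sum.inr k ∈ connPath xB Q R j := by
  intro j hj
  have hRinj : Function.Injective R := by
    intro a b hab
    have := hdistinct (show Sum.elim Q R (Sum.inr a) = Sum.elim Q R (Sum.inr b) by simpa using hab)
    simpa using this
  have hsame : ∀ (i : F) (c : C), c ≠ k → (c ∈ cliNbrs xA i ↔ c ∈ cliNbrs xB i) := by
    intro i c hc
    simp [cliNbrs, hagree i c hc]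
  have hn : ∀ v, nextV xA Q R v ≠ nextV xB Q R v →
      v = Sum.inr k ∨ nextV xA Q R v = some (Sum.inr k) ∨
        nextV xB Q R v = some (Sum.inr k) := by
    intro v hv
    cases v with
    | inr c =>
      by_cases hck : c = k
      · exact Or.inl (by rw [hck])
      · exfalso
        have : facNbrs xA c = facNbrs xB c := by
          ext i; simp [facNbrs, hagree i c hck]
        simp [nextV, this] at hv
    | inl i =>
      right
      by_cases hAne : (cliNbrs xA i).Nonempty
      · by_cases hBne : (cliNbrs xB i).Nonempty
        · set aA := argminOn R _ hAne with haA
          set aB := argminOn R _ hBne with haB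
          have hab : aA ≠ aB := by
            intro hEq
            apply hv
            simp [nextV, hAne, hBne, ← haA, ← haB, hEq]
          by_cases hAk : aA = k
          · exact Or.inl (by simp [nextV, hAne, ← haA, hAk])
          by_cases hBk : aB = k
          · exact Or.inr (by simp [nextV, hBne, ← haB, hBk])
          exfalso
          have hAmem : aA ∈ cliNbrs xB i :=
            (hsame i aA hAk).mp (argminOn_mem R _ hAne)
          have hBmem : aB ∈ cliNbrs xA i :=
            (hsame i aB hBk).mpr (argminOn_mem R _ hBne)
          have h1 : R aA ≤ R aB := argminOn_le R _ hAne hBmem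
          have h2 : R aB ≤ R aA := argminOn_le R _ hBne hAmem
          exact hab (hRinj (le_antisymm h1 h2))
        · -- B empty, A nonempty : cliNbrs xA i ⊆ {k}
          left
          have hk : argminOn R _ hAne = k := by
            by_contra hne
            have := (hsame i _ hne).mp (argminOn_mem R _ hAne)
            exact hBne ⟨_, this⟩
          simp [nextV, hAne, hk]
      · by_cases hBne : (cliNbrs xB i).Nonempty
        · right
          have hk : argminOn R _ hBne = k := by
            by_contra hne
            have := (hsame i _ hne).mpr (argminOn_mem R _ hBne)
            exact hAne ⟨_, this⟩
          simp [nextV, hBne, hk]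
        · exact absurd (by simp [nextV, hAne, hBne]) hv
  exact pathAux_diff _ _ (Sum.inr k) hn _ [] (Sum.inr j) hj

end DFL14
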